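/- Let G be a finite simple graph on n vertices, where n is even, and suppose there exists a magnetic potential α on G with λ_{n/2+1}(Δ_α^G) < 2. Then G has no Hamiltonian cycle. -/

import Mathlib

open Classical in
/-- The discrete magnetic Laplacian of a simple graph `G` on `Fin n` with magnetic
potential `α`. -/
noncomputable def magLap {n : ℕ} (G : SimpleGraph (Fin n)) (α : Fin n → Fin n → ℝ) :
    Matrix (Fin n) (Fin n) ℂ :=
  Matrix.of fun u v =>
    if u = v then ((G.neighborSet u).ncard : ℂ)
    else if G.Adj u v then -Complex.exp (α u v * Complex.I) else 0

lemma magLap_isHermitian {n : ℕ} (G : SimpleGraph (Fin n)) (α : Fin n → Fin n → ℝ)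
    (hα : ∀ u v, α v u = -α u v) : (magLap G α).IsHermitian := by
  rw [Matrix.IsHermitian]
  ext u v
  simp only [Matrix.conjTranspose_apply, magLap, Matrix.of_apply]
  by_cases huv : u = v
  · subst huv; simp
  · have hvu : ¬ v = u := fun h => huv h.symm
    rw [if_neg hvu, if_neg huv]
    by_cases hadj : G.Adj u v
    · rw [if_pos hadj.symm, if_pos hadj, star_neg]
      have h1 : star (Complex.exp ((α v u : ℂ) * Complex.I)) =
          Complex.exp ((starRingEnd ℂ) ((α v u : ℂ) * Complex.I)) :=
        (Complex.exp_conj _).symm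
      rw [h1]
      congr 1
      rw [hα u v]
      simp [map_mul, Complex.conj_ofReal, Complex.conj_I]
    · rw [if_neg (fun h => hadj h.symm), if_neg hadj, star_zero]

/-- The `k`-th smallest eigenvalue (1-indexed, with multiplicity) of a Hermitian
matrix, as an extended real number; `⊥` for `k = 0` and `⊤` for `k > n`. -/
noncomputable def lamb {n : ℕ} {A : Matrix (Fin n) (Fin n) ℂ} (hA : A.IsHermitian) (k : ℕ) :
    EReal :=
  if h : 1 ≤ k ∧ k ≤ n then
    (((hA.eigenvalues ∘ Tuple.sort hA.eigenvalues) ⟨k - 1, by omega⟩ : ℝ) : EReal)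
  else if k = 0 then ⊥ else ⊤

/-- The matching number of a graph: the maximal number of pairwise independent edges. -/
noncomputable def matchingNumber {n : ℕ} (G : SimpleGraph (Fin n)) : ℕ :=
  sSup {k : ℕ | ∃ M : G.Subgraph, M.IsMatching ∧ M.edgeSet.ncard = k}

/-!
A Hamiltonian cycle through an even number `n` of vertices contains a perfect matching, i.e. an
involution `σ` with `u ~ σ u` for every `u`. The quadratic form of `Δ_α` is
`⟨x, Δ_α x⟩ = ½ ∑_{u ~ v} |x_u - e^{iα(u,v)} x_v|²`, so keeping only the matching edges shows
`⟨x, Δ_α x⟩ ≥ 2‖x‖²` whenever `x_u = -e^{iα(u,σ u)} x_{σ u}` for all `u`. These vectors are cut out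
by `n/2` linear conditions, one per matching edge. Imposing moreover orthogonality to the
`n/2 - 1` eigenvectors above `λ_{n/2+1}` still leaves a nonzero `x`, and for it
`⟨x, Δ_α x⟩ ≤ λ_{n/2+1} ‖x‖² < 2‖x‖²`.
-/

open Function Matrix Complex WithLp

theorem Fin.exists_involutive_consecutive {m : ℕ} (hm : Even m) :
    ∃ τ : Fin m → Fin m, Involutive τ ∧ ∀ i, (τ i : ℕ) = i + 1 ∨ (i : ℕ) = τ i + 1 := by
  obtain ⟨k, rfl⟩ := hm
  refine ⟨fun i => ⟨if i.val % 2 = 0 then i + 1 else i - 1, by split_ifs <;> omega⟩,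
    fun i => Fin.ext ?_, fun i => ?_⟩ <;> simp only <;> split_ifs <;> omega

theorem Function.Involutive.card_subtype_lt_mul_two {ι : Type*} [Fintype ι] [LinearOrder ι]
    {σ : ι → ι} (hσ : Involutive σ) (hfix : ∀ i, σ i ≠ i) :
    Fintype.card {i // i < σ i} * 2 = Fintype.card ι := by
  classical
  have hswap : (Finset.univ.filter fun i => ¬ i < σ i).card
      = (Finset.univ.filter fun i => i < σ i).card := by
    refine Finset.card_nbij' σ σ ?_ ?_ (fun i _ => hσ i) (fun i _ => hσ i) <;>
      intro i <;> simp only [Finset.coe_filter, Finset.mem_univ, true_and, Set.mem_ofPred_eq, hσ i]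
    · exact fun h => lt_of_le_of_ne (not_lt.1 h) (hfix i)
    · exact not_lt_of_gt
  rw [Fintype.card_subtype, mul_two]
  nth_rw 2 [← hswap]
  exact Finset.card_filter_add_card_filter_not _

namespace SimpleGraph

variable {V : Type*} {G : SimpleGraph V}

theorem Walk.IsHamiltonian.exists_involutive_adj [DecidableEq V] {a b : V} {p : G.Walk a b}
    (hp : p.IsHamiltonian) (heven : Even p.support.length) :
    ∃ σ : V → V, Involutive σ ∧ ∀ v, G.Adj v (σ v) := by
  obtain ⟨τ, hτ, hτ_adj⟩ := Fin.exists_involutive_consecutive heven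
  let e := hp.getVertEquiv
  refine ⟨e ∘ τ ∘ e.symm, fun v => by simp [hτ _], e.surjective.forall.2 fun i => ?_⟩
  change G.Adj (e i) (e (τ (e.symm (e i))))
  rw [e.symm_apply_apply]
  change G.Adj (p.getVert i) (p.getVert (τ i))
  have hlen := p.length_support
  rcases hτ_adj i with h | h
  · rw [h]; exact p.adj_getVert_succ (by omega)
  · rw [h]; exact (p.adj_getVert_succ (by omega)).symm

theorem IsHamiltonian.exists_involutive_adj [Fintype V] [DecidableEq V] (hG : G.IsHamiltonian)
    (hV : Even (Fintype.card V)) : ∃ σ : V → V, Involutive σ ∧ ∀ v, G.Adj v (σ v) := by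
  obtain ⟨_, p, hp⟩ := hG (by rintro h; simp [h] at hV)
  exact hp.isHamiltonian_tail.exists_involutive_adj (hp.isHamiltonian_tail.length_support ▸ hV)

end SimpleGraph

theorem exists_ne_zero_forall_eq_zero_of_card_lt_finrank {K V ι : Type*} [Field K]
    [AddCommGroup V] [Module K V] [FiniteDimensional K V] [Fintype ι] (f : ι → V →ₗ[K] K)
    (h : Fintype.card ι < Module.finrank K V) : ∃ x ≠ 0, ∀ i, f i x = 0 := by
  obtain ⟨x, hx, hx0⟩ := Submodule.exists_mem_ne_zero_of_ne_bot
    (LinearMap.ker_ne_bot_of_finrank_lt (f := LinearMap.pi f) (by simpa using h))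
  exact ⟨x, hx0, fun i => congr_fun (LinearMap.mem_ker.1 hx) i⟩

theorem exists_ne_zero_forall_add_mul_eq_zero_and_forall_inner_eq_zero {ι : Type*} [Fintype ι]
    [LinearOrder ι] {σ : ι → ι} (hσ : Involutive σ) (hfix : ∀ i, σ i ≠ i) (c : ι → ℂ) {m : ℕ}
    (w : Fin m → EuclideanSpace ℂ ι) (hm : 2 * m < Fintype.card ι) :
    ∃ x : ι → ℂ, x ≠ 0 ∧ (∀ i, i < σ i → x i + c i * x (σ i) = 0) ∧
      ∀ j, inner ℂ (w j) (toLp 2 x) = 0 := by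
  let f : {i // i < σ i} ⊕ Fin m → (ι → ℂ) →ₗ[ℂ] ℂ := Sum.elim
    (fun i => LinearMap.proj i.1 + c i.1 • LinearMap.proj (σ i.1))
    (fun j => (innerₛₗ ℂ (w j)).comp (WithLp.linearEquiv 2 ℂ (ι → ℂ)).symm.toLinearMap)
  have hcard : Fintype.card ({i // i < σ i} ⊕ Fin m) < Module.finrank ℂ (ι → ℂ) := by
    have := hσ.card_subtype_lt_mul_two hfix
    simp only [Fintype.card_sum, Fintype.card_fin, Module.finrank_fintype_fun_eq_card]
    omega
  obtain ⟨x, hx0, hx⟩ := exists_ne_zero_forall_eq_zero_of_card_lt_finrank f hcard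
  exact ⟨x, hx0, fun i hi => by simpa [f] using hx (.inl ⟨i, hi⟩),
    fun j => by simpa [f] using hx (.inr j)⟩

namespace Matrix.IsHermitian

variable {𝕜 ι : Type*} [RCLike 𝕜] [Fintype ι] [DecidableEq ι] {A : Matrix ι ι 𝕜}

theorem inner_eigenvectorBasis_mulVec (hA : A.IsHermitian) (i : ι) (x : ι → 𝕜) :
    inner 𝕜 (hA.eigenvectorBasis i) (toLp 2 (A *ᵥ x)) =
      hA.eigenvalues i * inner 𝕜 (hA.eigenvectorBasis i) (toLp 2 x) := by
  have heig : toEuclideanLin A (hA.eigenvectorBasis i)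
      = (hA.eigenvalues i : 𝕜) • hA.eigenvectorBasis i := by
    rw [toLpLin_apply, hA.mulVec_eigenvectorBasis, RCLike.real_smul_eq_coe_smul (K := 𝕜)]
    rfl
  have hsymm := (isSymmetric_toEuclideanLin_iff.mpr hA) (hA.eigenvectorBasis i) (toLp 2 x)
  rw [heig, inner_smul_left, RCLike.conj_ofReal] at hsymm
  exact hsymm.symm

theorem re_dotProduct_mulVec_eq_sum (hA : A.IsHermitian) (x : ι → 𝕜) :
    RCLike.re (star x ⬝ᵥ A *ᵥ x) =
      ∑ i, hA.eigenvalues i * ‖inner 𝕜 (hA.eigenvectorBasis i) (toLp 2 x)‖ ^ 2 := by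
  rw [dotProduct_comm, ← EuclideanSpace.inner_toLp_toLp,
    ← (hA.eigenvectorBasis).sum_inner_mul_inner, map_sum]
  refine Finset.sum_congr rfl fun i _ => ?_
  rw [inner_eigenvectorBasis_mulVec, ← inner_conj_symm, mul_left_comm, RCLike.conj_mul,
    ← RCLike.ofReal_pow, ← RCLike.ofReal_mul, RCLike.ofReal_re]

theorem re_dotProduct_mulVec_lt (hA : A.IsHermitian) {μ : ℝ} {x : ι → 𝕜} (hx : x ≠ 0)
    (h : ∀ i, hA.eigenvalues i < μ ∨ inner 𝕜 (hA.eigenvectorBasis i) (toLp 2 x) = 0) :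
    RCLike.re (star x ⬝ᵥ A *ᵥ x) < μ * ‖toLp 2 x‖ ^ 2 := by
  rw [hA.re_dotProduct_mulVec_eq_sum, ← (hA.eigenvectorBasis).sum_sq_norm_inner_right,
    Finset.mul_sum]
  obtain ⟨i, hi⟩ : ∃ i, inner 𝕜 (hA.eigenvectorBasis i) (toLp 2 x) ≠ 0 := by
    by_contra! h0
    have hnorm := (hA.eigenvectorBasis).sum_sq_norm_inner_right (toLp 2 x)
    exact hx (by simpa [h0] using hnorm.symm)
  refine Finset.sum_lt_sum (fun j _ => ?_) ⟨i, Finset.mem_univ i, ?_⟩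
  · rcases h j with hj | hj
    · exact mul_le_mul_of_nonneg_right hj.le (by positivity)
    · simp [hj]
  · exact mul_lt_mul_of_pos_right ((h i).resolve_right hi) (by positivity)

end Matrix.IsHermitian

theorem re_dotProduct_mulVec_lt_of_lamb_lt {n k : ℕ} {A : Matrix (Fin n) (Fin n) ℂ}
    (hA : A.IsHermitian) (hk : k < n) {μ : ℝ} (h : lamb hA (k + 1) < (μ : EReal))
    {x : Fin n → ℂ} (hx : x ≠ 0)
    (horth : ∀ j : Fin (n - (k + 1)), inner ℂ
      (hA.eigenvectorBasis (Tuple.sort hA.eigenvalues ⟨k + 1 + j, by omega⟩)) (toLp 2 x) = 0) :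
    (star x ⬝ᵥ A *ᵥ x).re < μ * ‖toLp 2 x‖ ^ 2 := by
  rw [lamb, dif_pos ⟨by omega, by omega⟩, EReal.coe_lt_coe_iff] at h
  refine hA.re_dotProduct_mulVec_lt hx fun i => ?_
  obtain ⟨j, rfl⟩ := (Tuple.sort hA.eigenvalues).surjective i
  by_cases hj : j.val ≤ k
  · exact .inl ((Tuple.monotone_sort hA.eigenvalues (show j ≤ ⟨k, hk⟩ from hj)).trans_lt h)
  · have hj' : (⟨k + 1 + (j - (k + 1)), by omega⟩ : Fin n) = j :=
      Fin.ext (by simp only; omega)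
    exact .inr (hj' ▸ horth ⟨j - (k + 1), by omega⟩)

theorem Complex.re_conj_mul_sub_mul_of_norm_eq_one {a b e : ℂ} (he : ‖e‖ = 1) :
    (starRingEnd ℂ a * (a - e * b)).re = (‖a - e * b‖ ^ 2 + ‖a‖ ^ 2 - ‖b‖ ^ 2) / 2 := by
  have hb : ‖b‖ = ‖e * b‖ := by rw [norm_mul, he, one_mul]
  rw [hb, @norm_sub_sq ℂ, ← @inner_self_eq_norm_sq ℂ, RCLike.inner_apply', RCLike.inner_apply',
    mul_sub, sub_re]
  simp only [RCLike.re_to_complex]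
  ring

section MagneticLaplacian

variable {n : ℕ} (G : SimpleGraph (Fin n)) [DecidableRel G.Adj] (α : Fin n → Fin n → ℝ)

theorem magLap_mulVec_apply (x : Fin n → ℂ) (u : Fin n) :
    (magLap G α *ᵥ x) u = ∑ v, if G.Adj u v then x u - exp (α u v * I) * x v else 0 := by
  have hdeg : ((G.neighborSet u).ncard : ℂ) * x u = ∑ v, if G.Adj u v then x u else 0 := by
    rw [Finset.sum_ite, Finset.sum_const_zero, add_zero, Finset.sum_const, nsmul_eq_mul,
      ← Set.ncard_coe_finset]
    congr
    ext v
    simp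
  have hentry : ∀ v, magLap G α u v * x v =
      (if u = v then ((G.neighborSet u).ncard : ℂ) * x u else 0)
        + if G.Adj u v then -(exp (α u v * I) * x v) else 0 := by
    intro v
    by_cases huv : u = v
    · subst huv; simp [magLap]
    · by_cases hadj : G.Adj u v <;> simp [magLap, huv, hadj]
  rw [mulVec, dotProduct, Finset.sum_congr rfl fun v _ => hentry v, Finset.sum_add_distrib,
    Finset.sum_ite_eq, if_pos (Finset.mem_univ u), hdeg, ← Finset.sum_add_distrib]
  refine Finset.sum_congr rfl fun v _ => ?_
  split_ifs <;> ring

theorem re_star_dotProduct_magLap_mulVec (x : Fin n → ℂ) :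
    (star x ⬝ᵥ magLap G α *ᵥ x).re =
      (∑ u, ∑ v, if G.Adj u v then ‖x u - exp (α u v * I) * x v‖ ^ 2 else 0) / 2 := by
  have hswap : (∑ u, ∑ v, if G.Adj u v then ‖x v‖ ^ 2 else 0)
      = ∑ u, ∑ v, if G.Adj u v then ‖x u‖ ^ 2 else 0 := by
    rw [Finset.sum_comm]
    simp only [G.adj_comm]
  calc (star x ⬝ᵥ magLap G α *ᵥ x).re
      = ∑ u, ∑ v, if G.Adj u v then (starRingEnd ℂ (x u) * (x u - exp (α u v * I) * x v)).re
          else 0 := by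
        simp only [dotProduct, magLap_mulVec_apply, Pi.star_apply, RCLike.star_def,
          Finset.mul_sum, mul_ite, mul_zero, re_sum, apply_ite re, zero_re]
    _ = ∑ u, ∑ v, ((if G.Adj u v then ‖x u - exp (α u v * I) * x v‖ ^ 2 else 0)
          + (if G.Adj u v then ‖x u‖ ^ 2 else 0)
          - (if G.Adj u v then ‖x v‖ ^ 2 else 0)) / 2 := by
        refine Finset.sum_congr rfl fun u _ => Finset.sum_congr rfl fun v _ => ?_
        split_ifs
        · exact re_conj_mul_sub_mul_of_norm_eq_one (norm_exp_ofReal_mul_I _)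
        · ring
    _ = _ := by
        simp only [← Finset.sum_div, Finset.sum_sub_distrib, Finset.sum_add_distrib, hswap]
        ring

theorem two_mul_norm_sq_le_re_star_dotProduct_magLap_mulVec {σ : Fin n → Fin n}
    (hadj : ∀ u, G.Adj u (σ u)) {x : Fin n → ℂ}
    (hx : ∀ u, exp (α u (σ u) * I) * x (σ u) = -x u) :
    2 * ‖toLp 2 x‖ ^ 2 ≤ (star x ⬝ᵥ magLap G α *ᵥ x).re := by
  have hu : ∀ u, 4 * ‖x u‖ ^ 2 ≤
      ∑ v, if G.Adj u v then ‖x u - exp (α u v * I) * x v‖ ^ 2 else 0 := by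
    intro u
    have hσu : ‖x u - exp (α u (σ u) * I) * x (σ u)‖ ^ 2 = 4 * ‖x u‖ ^ 2 := by
      rw [hx u, sub_neg_eq_add, ← two_mul, norm_mul, mul_pow]
      norm_num
    calc 4 * ‖x u‖ ^ 2
        = if G.Adj u (σ u) then ‖x u - exp (α u (σ u) * I) * x (σ u)‖ ^ 2 else 0 := by
          rw [if_pos (hadj u), hσu]
      _ ≤ _ := Finset.single_le_sum (f := fun v =>
          if G.Adj u v then ‖x u - exp (α u v * I) * x v‖ ^ 2 else 0)
          (fun v _ => by split_ifs <;> positivity)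
          (Finset.mem_univ (σ u))
  rw [re_star_dotProduct_magLap_mulVec, EuclideanSpace.norm_sq_eq]
  have := Finset.sum_le_sum fun u (_ : u ∈ Finset.univ) => hu u
  rw [← Finset.mul_sum] at this
  linarith

end MagneticLaplacian

theorem Complex.exp_ofReal_mul_I_mul_exp_ofReal_mul_I_of_eq_neg {θ φ : ℝ} (h : φ = -θ) :
    exp (θ * I) * exp (φ * I) = 1 := by
  rw [← exp_add, h, ofReal_neg, neg_mul, add_neg_cancel, exp_zero]

theorem exp_mul_apply_eq_neg_of_forall_lt {ι : Type*} [LinearOrder ι] {α : ι → ι → ℝ}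
    (hα : ∀ u v, α v u = -α u v) {σ : ι → ι} (hσ : Involutive σ) (hfix : ∀ u, σ u ≠ u)
    {x : ι → ℂ} (hx : ∀ u, u < σ u → x u + exp (α u (σ u) * I) * x (σ u) = 0) (u : ι) :
    exp (α u (σ u) * I) * x (σ u) = -x u := by
  rcases (hfix u).lt_or_gt with h | h
  · have hσu := hx (σ u) (by rwa [hσ u])
    rw [hσ u] at hσu
    linear_combination exp (α u (σ u) * I) * hσu
      - x u * exp_ofReal_mul_I_mul_exp_ofReal_mul_I_of_eq_neg (hα u (σ u))
  · linear_combination hx u h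

/-- If `G` has an even number `n` of vertices and some magnetic
potential `α` satisfies `λ_{n/2+1}(Δ_α^G) < 2`, then `G` has no Hamiltonian cycle. -/
theorem spectral_obstruction_hamiltonian {n : ℕ} (G : SimpleGraph (Fin n)) (hn : Even n)
    (α : Fin n → Fin n → ℝ) (hα : ∀ u v, α v u = -α u v)
    (h : lamb (magLap_isHermitian G α hα) (n / 2 + 1) < ((2 : ℝ) : EReal)) :
    ¬ G.IsHamiltonian := by
  classical
  intro hG
  have hpos : 0 < n := Nat.pos_of_ne_zero fun h0 => by
    subst h0; exact SimpleGraph.not_isHamiltonian_of_isEmpty hG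
  obtain ⟨σ, hσ, hadj⟩ := hG.exists_involutive_adj (by simpa using hn)
  have hfix : ∀ u, σ u ≠ u := fun u hu => G.irrefl (hu ▸ hadj u)
  set hA := magLap_isHermitian G α hα
  obtain ⟨x, hx0, hpair, horth⟩ :=
    exists_ne_zero_forall_add_mul_eq_zero_and_forall_inner_eq_zero hσ hfix
      (fun u => exp (α u (σ u) * I))
      (fun j : Fin (n - (n / 2 + 1)) =>
        hA.eigenvectorBasis (Tuple.sort hA.eigenvalues ⟨n / 2 + 1 + j, by omega⟩))
      (by simp only [Fintype.card_fin]; omega)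
  have hlow := two_mul_norm_sq_le_re_star_dotProduct_magLap_mulVec G α hadj
    (exp_mul_apply_eq_neg_of_forall_lt hα hσ hfix hpair)
  have hup := re_dotProduct_mulVec_lt_of_lamb_lt hA (by omega) h hx0 horth
  linarith
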